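/- Let V be a vector space with nondegenerate symmetric form g. The map W ↦ L given by L_{ABCD} = (2/3)(W_{ABCD} + W_{ADCB}) is a linear isomorphism from the space 𝔚 of algebraic Weyl tensors (X_{ABCD} = -X_{BACD} = -X_{ABDC}, X_{A[BCD]} = 0, X_{ABC}{}^B = 0) onto the space 𝔎 = {X : X_{ABCD} = X_{ADCB} = X_{CBAD}, X_{A(BCD)} = 0, X_{ABC}{}^C = 0}, with inverse L ↦ W given by W_{ABCD} = L_{[AB][CD]} (antisymmetrizing over the first pair and the second pair). -/
import Mathlib


noncomputable section
open scoped BigOperators Matrix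

/-- Rank-4 covariant tensors on `ℝ^N`. -/
abbrev T4 (N : ℕ) := Fin N → Fin N → Fin N → Fin N → ℝ

/-- Algebraic Weyl tensors: antisymmetric in each pair, first Bianchi identity
`X_{A[BCD]} = 0`, and trace-free `X_{ABC}{}^B = 0`. -/
def IsWeylT {N : ℕ} (gi : Fin N → Fin N → ℝ) (X : T4 N) : Prop :=
  (∀ A B C D, X A B C D = -X B A C D) ∧ (∀ A B C D, X A B C D = -X A B D C) ∧
    (∀ A B C D, X A B C D + X A C D B + X A D B C = 0) ∧
    (∀ A C, (∑ b, ∑ d, gi b d * X A b C d) = 0)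

/-- The space `𝔎`: `X_{ABCD} = X_{ADCB} = X_{CBAD}`, `X_{A(BCD)} = 0`,
`X_{ABC}{}^C = 0`. -/
def IsKT {N : ℕ} (gi : Fin N → Fin N → ℝ) (X : T4 N) : Prop :=
  (∀ A B C D, X A B C D = X A D C B) ∧ (∀ A B C D, X A B C D = X C B A D) ∧
    (∀ A B C D,
      X A B C D + X A B D C + X A C B D + X A C D B + X A D B C + X A D C B = 0) ∧
    (∀ A B, (∑ c, ∑ d, gi c d * X A B c d) = 0)

/-- The map `W ↦ L`, `L_{ABCD} = (2/3)(W_{ABCD} + W_{ADCB})`. -/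
def WtoK {N : ℕ} (W : T4 N) : T4 N :=
  fun A B C D => (2 / 3) * (W A B C D + W A D C B)

/-- The map `L ↦ W`, `W_{ABCD} = L_{[AB][CD]}`. -/
def KtoW {N : ℕ} (L : T4 N) : T4 N :=
  fun A B C D => (1 / 4) * (L A B C D - L B A C D - L A B D C + L B A D C)

theorem gi_symm' {N : ℕ} (g gi : Fin N → Fin N → ℝ)
    (hgsymm : ∀ a b, g a b = g b a)
    (hginv : ∀ a b, (∑ c, gi a c * g c b) = if a = b then (1:ℝ) else 0) :
    ∀ a b, gi a b = gi b a := by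
  set M : Matrix (Fin N) (Fin N) ℝ := Matrix.of g with hM
  set Mi : Matrix (Fin N) (Fin N) ℝ := Matrix.of gi with hMi
  have h1 : Mi * M = 1 := by
    ext a b
    rw [Matrix.mul_apply]
    simpa [Matrix.one_apply, hM, hMi] using hginv a b
  have h2 : M * Mi = 1 := mul_eq_one_comm.mp h1
  have hMt : Mᵀ = M := by
    ext a b; exact hgsymm b a
  have h3 : Miᵀ * M = 1 := by
    have := congrArg Matrix.transpose h2
    rwa [Matrix.transpose_mul, hMt, Matrix.transpose_one] at this
  have h4 : Miᵀ = Mi := by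
    calc Miᵀ = Miᵀ * (M * Mi) := by rw [h2, mul_one]
    _ = (Miᵀ * M) * Mi := by rw [mul_assoc]
    _ = Mi := by rw [h3, one_mul]
  intro a b
  have := congrFun (congrFun h4 b) a
  simpa [Matrix.transpose_apply, hMi] using this

theorem swapSum {N : ℕ} (gi : Fin N → Fin N → ℝ) (hgis : ∀ a b, gi a b = gi b a)
    (F : Fin N → Fin N → ℝ) :
    ∑ b, ∑ d, gi b d * F b d = ∑ b, ∑ d, gi b d * F d b := by
  rw [Finset.sum_comm]
  exact Finset.sum_congr rfl fun x _ => Finset.sum_congr rfl fun y _ => by rw [hgis]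

theorem weyl_pair {N : ℕ} (W : T4 N)
    (h1 : ∀ A B C D, W A B C D = -W B A C D)
    (h2 : ∀ A B C D, W A B C D = -W A B D C)
    (h3 : ∀ A B C D, W A B C D + W A C D B + W A D B C = 0) :
    ∀ A B C D, W A B C D = W C D A B := by
  intro A B C D
  linarith [h3 A B C D, h3 B C D A, h3 C D A B, h3 D A B C,
    h1 A B C D, h1 A B D C, h1 A C B D, h1 A C D B, h1 A D B C, h1 A D C B, h1 B A C D, h1 B A D C, h1 B C A D, h1 B C D A, h1 B D A C, h1 B D C A, h1 C A B D, h1 C A D B, h1 C B A D, h1 C B D A, h1 C D A B, h1 C D B A, h1 D A B C, h1 D A C B, h1 D B A C, h1 D B C A, h1 D C A B, h1 D C B A,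
    h2 A B C D, h2 A B D C, h2 A C B D, h2 A C D B, h2 A D B C, h2 A D C B, h2 B A C D, h2 B A D C, h2 B C A D, h2 B C D A, h2 B D A C, h2 B D C A, h2 C A B D, h2 C A D B, h2 C B A D, h2 C B D A, h2 C D A B, h2 C D B A, h2 D A B C, h2 D A C B, h2 D B A C, h2 D B C A, h2 D C A B, h2 D C B A]

theorem K_star {N : ℕ} (L : T4 N)
    (k1 : ∀ A B C D, L A B C D = L A D C B)
    (k3 : ∀ A B C D,
      L A B C D + L A B D C + L A C B D + L A C D B + L A D B C + L A D C B = 0) :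
    ∀ A B C D, L A B C D + L A B D C + L A D B C = 0 := by
  intro A B C D
  linarith [k3 A B C D, k1 A C B D, k1 A C D B, k1 A D C B, k1 A B C D, k1 A B D C, k1 A D B C]

theorem K_cyc {N : ℕ} (L : T4 N)
    (k1 : ∀ A B C D, L A B C D = L A D C B)
    (k2 : ∀ A B C D, L A B C D = L C B A D)
    (st : ∀ A B C D, L A B C D + L A B D C + L A D B C = 0) :
    ∀ A B C D, L D A B C = L A B C D := by
  intro A B C D
  linarith [st A B C D, st B A C D, st D A B C, st C A B D,
    k2 B A D C, k2 B D A C, k2 D A C B, k2 D C A B, k2 C A B D, k2 C A D B, k2 C D A B,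
    k1 A C D B, k1 A D B C, k1 A B C D, k1 C B A D, k1 D A B C, k1 B A C D,
    k2 B A C D, k1 A C B D, k1 D A C B, k2 D A B C]

-- K-side trace lemmas
theorem K_T2 {N : ℕ} (gi : Fin N → Fin N → ℝ) (hgis : ∀ a b, gi a b = gi b a)
    (L : T4 N)
    (k1 : ∀ A B C D, L A B C D = L A D C B)
    (k4 : ∀ A B, (∑ c, ∑ d, gi c d * L A B c d) = 0) :
    ∀ A C, (∑ b, ∑ d, gi b d * L A b d C) = 0 := by
  intro A C
  have e1 : (∑ b, ∑ d, gi b d * L A b d C) = ∑ b, ∑ d, gi b d * L A C d b :=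
    Finset.sum_congr rfl fun b _ => Finset.sum_congr rfl fun d _ => by rw [k1 A b d C]
  have e2 : (∑ b, ∑ d, gi b d * L A C d b) = ∑ b, ∑ d, gi b d * L A C b d :=
    swapSum gi hgis (fun b d => L A C d b)
  rw [e1, e2, k4 A C]

theorem K_T24 {N : ℕ} (gi : Fin N → Fin N → ℝ) (hgis : ∀ a b, gi a b = gi b a)
    (L : T4 N)
    (k1 : ∀ A B C D, L A B C D = L A D C B)
    (k3 : ∀ A B C D,
      L A B C D + L A B D C + L A C B D + L A C D B + L A D B C + L A D C B = 0)
    (k4 : ∀ A B, (∑ c, ∑ d, gi c d * L A B c d) = 0) :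
    ∀ A C, (∑ b, ∑ d, gi b d * L A b C d) = 0 := by
  intro A C
  have key : ∑ b, ∑ d, (gi b d * L A b C d + gi b d * L A b d C + gi b d * L A C b d
      + gi b d * L A C d b + gi b d * L A d b C + gi b d * L A d C b) = 0 :=
    Finset.sum_eq_zero fun b _ => Finset.sum_eq_zero fun d _ => by
      linear_combination gi b d * k3 A b C d
  simp only [Finset.sum_add_distrib] at key
  have e2 := K_T2 gi hgis L k1 k4 A C
  have e3 := k4 A C
  have e4 : (∑ b, ∑ d, gi b d * L A C d b) = ∑ b, ∑ d, gi b d * L A C b d :=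
    swapSum gi hgis (fun b d => L A C d b)
  have e5 : (∑ b, ∑ d, gi b d * L A d b C) = ∑ b, ∑ d, gi b d * L A b d C :=
    swapSum gi hgis (fun b d => L A d b C)
  have e6 : (∑ b, ∑ d, gi b d * L A d C b) = ∑ b, ∑ d, gi b d * L A b C d :=
    swapSum gi hgis (fun b d => L A d C b)
  linarith [key, e2, e3, e4, e5, e6]

theorem K_U {N : ℕ} (gi : Fin N → Fin N → ℝ) (hgis : ∀ a b, gi a b = gi b a)
    (L : T4 N)
    (k1 : ∀ A B C D, L A B C D = L A D C B)
    (k2 : ∀ A B C D, L A B C D = L C B A D)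
    (k3 : ∀ A B C D,
      L A B C D + L A B D C + L A C B D + L A C D B + L A D B C + L A D C B = 0)
    (k4 : ∀ A B, (∑ c, ∑ d, gi c d * L A B c d) = 0) :
    ∀ A C, (∑ b, ∑ d, gi b d * L b A d C) = 0 := by
  intro A C
  have key : ∑ b, ∑ d, (gi b d * L b A C d + gi b d * L b A d C + gi b d * L b C A d
      + gi b d * L b C d A + gi b d * L b d A C + gi b d * L b d C A) = 0 :=
    Finset.sum_eq_zero fun b _ => Finset.sum_eq_zero fun d _ => by
      linear_combination gi b d * k3 b A C d
  simp only [Finset.sum_add_distrib] at key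
  have e1 : (∑ b, ∑ d, gi b d * L b A C d) = 0 := by
    have : (∑ b, ∑ d, gi b d * L b A C d) = ∑ b, ∑ d, gi b d * L C A b d :=
      Finset.sum_congr rfl fun b _ => Finset.sum_congr rfl fun d _ => by rw [k2 b A C d]
    rw [this, k4 C A]
  have e3 : (∑ b, ∑ d, gi b d * L b C A d) = 0 := by
    have : (∑ b, ∑ d, gi b d * L b C A d) = ∑ b, ∑ d, gi b d * L A C b d :=
      Finset.sum_congr rfl fun b _ => Finset.sum_congr rfl fun d _ => by rw [k2 b C A d]
    rw [this, k4 A C]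
  have e4 : (∑ b, ∑ d, gi b d * L b C d A) = ∑ b, ∑ d, gi b d * L b A d C :=
    Finset.sum_congr rfl fun b _ => Finset.sum_congr rfl fun d _ => by rw [k1 b C d A]
  have e5 : (∑ b, ∑ d, gi b d * L b d A C) = 0 := by
    have h : (∑ b, ∑ d, gi b d * L b d A C) = ∑ b, ∑ d, gi b d * L A d b C :=
      Finset.sum_congr rfl fun b _ => Finset.sum_congr rfl fun d _ => by rw [k2 b d A C]
    have h2 : (∑ b, ∑ d, gi b d * L A d b C) = ∑ b, ∑ d, gi b d * L A b d C :=
      swapSum gi hgis (fun b d => L A d b C)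
    rw [h, h2, K_T2 gi hgis L k1 k4 A C]
  have e6 : (∑ b, ∑ d, gi b d * L b d C A) = 0 := by
    have h : (∑ b, ∑ d, gi b d * L b d C A) = ∑ b, ∑ d, gi b d * L b A C d :=
      Finset.sum_congr rfl fun b _ => Finset.sum_congr rfl fun d _ => by rw [k1 b d C A]
    rw [h, e1]
  linarith [key, e1, e3, e4, e5, e6]

theorem weyl_S1 {N : ℕ} (gi : Fin N → Fin N → ℝ) (hgis : ∀ a b, gi a b = gi b a)
    (W : T4 N) (h2 : ∀ A B C D, W A B C D = -W A B D C) :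
    ∀ A B, (∑ c, ∑ d, gi c d * W A B c d) = 0 := by
  intro A B
  have e1 : (∑ c, ∑ d, gi c d * W A B c d) = ∑ c, ∑ d, gi c d * W A B d c :=
    swapSum gi hgis (fun c d => W A B c d)
  have e2 : (∑ c, ∑ d, gi c d * W A B d c) = ∑ c, ∑ d, -(gi c d * W A B c d) :=
    Finset.sum_congr rfl fun c _ => Finset.sum_congr rfl fun d _ => by
      rw [h2 A B d c]; ring
  have e3 : (∑ c, ∑ d, -(gi c d * W A B c d)) = -(∑ c, ∑ d, gi c d * W A B c d) := by
    simp [Finset.sum_neg_distrib]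
  linarith [e1.trans (e2.trans e3)]

theorem weyl_S2 {N : ℕ} (gi : Fin N → Fin N → ℝ) (hgis : ∀ a b, gi a b = gi b a)
    (W : T4 N) (h2 : ∀ A B C D, W A B C D = -W A B D C)
    (h4 : ∀ A C, (∑ b, ∑ d, gi b d * W A b C d) = 0) :
    ∀ A B, (∑ c, ∑ d, gi c d * W A d c B) = 0 := by
  intro A B
  have e1 : (∑ c, ∑ d, gi c d * W A d c B) = ∑ c, ∑ d, gi c d * W A c d B :=
    swapSum gi hgis (fun c d => W A d c B)
  have e2 : (∑ c, ∑ d, gi c d * W A c d B) = ∑ c, ∑ d, -(gi c d * W A c B d) :=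
    Finset.sum_congr rfl fun c _ => Finset.sum_congr rfl fun d _ => by
      rw [h2 A c B d]; ring
  have e3 : (∑ c, ∑ d, -(gi c d * W A c B d)) = -(∑ c, ∑ d, gi c d * W A c B d) := by
    simp [Finset.sum_neg_distrib]
  rw [e1, e2, e3, h4 A B, neg_zero]

/-- `W ↦ (2/3)(W_{ABCD} + W_{ADCB})` is a (linear) isomorphism
from the space of algebraic Weyl tensors onto `𝔎`, with inverse
`L ↦ L_{[AB][CD]}`. -/
theorem weyl_K_isomorphism {N : ℕ} (g gi : Fin N → Fin N → ℝ)
    (hgsymm : ∀ a b, g a b = g b a)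
    (hginv : ∀ a b, (∑ c, gi a c * g c b) = if a = b then (1 : ℝ) else 0) :
    (∀ W : T4 N, IsWeylT gi W → IsKT gi (WtoK W) ∧ KtoW (WtoK W) = W)
      ∧ (∀ L : T4 N, IsKT gi L → IsWeylT gi (KtoW L) ∧ WtoK (KtoW L) = L) := by
  have hgis := gi_symm' g gi hgsymm hginv
  constructor
  · intro W hW
    obtain ⟨h1, h2, h3, h4⟩ := hW
    have hpair := weyl_pair W h1 h2 h3
    constructor
    · refine ⟨?_, ?_, ?_, ?_⟩
      · intro A B C D; simp only [WtoK]; ring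
      · intro A B C D; simp only [WtoK]
        linarith [hpair A B C D, hpair A D C B]
      · intro A B C D; simp only [WtoK]
        linarith [h3 A B C D, h3 A B D C]
      · intro A B
        have expand : (∑ c, ∑ d, gi c d * WtoK W A B c d)
            = ∑ c, ∑ d, ((2/3) * (gi c d * W A B c d) + (2/3) * (gi c d * W A d c B)) :=
          Finset.sum_congr rfl fun c _ => Finset.sum_congr rfl fun d _ => by
            simp only [WtoK]; ring
        rw [expand]
        simp only [Finset.sum_add_distrib, ← Finset.mul_sum]
        rw [weyl_S1 gi hgis W h2 A B, weyl_S2 gi hgis W h2 h4 A B]; ring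
    · funext A B C D
      simp only [KtoW, WtoK]
      linarith [h3 A B C D, h3 B C D A, h3 C D A B, h3 D A B C,
        hpair A B C D, hpair A B D C, hpair A C B D, hpair A C D B, hpair A D B C, hpair A D C B, hpair B A C D, hpair B A D C, hpair B C A D, hpair B C D A, hpair B D A C, hpair B D C A, hpair C A B D, hpair C A D B, hpair C B A D, hpair C B D A, hpair C D A B, hpair C D B A, hpair D A B C, hpair D A C B, hpair D B A C, hpair D B C A, hpair D C A B, hpair D C B A,
        h1 A B C D, h1 A B D C, h1 A C B D, h1 A C D B, h1 A D B C, h1 A D C B, h1 B A C D, h1 B A D C, h1 B C A D, h1 B C D A, h1 B D A C, h1 B D C A, h1 C A B D, h1 C A D B, h1 C B A D, h1 C B D A, h1 C D A B, h1 C D B A, h1 D A B C, h1 D A C B, h1 D B A C, h1 D B C A, h1 D C A B, h1 D C B A,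
        h2 A B C D, h2 A B D C, h2 A C B D, h2 A C D B, h2 A D B C, h2 A D C B, h2 B A C D, h2 B A D C, h2 B C A D, h2 B C D A, h2 B D A C, h2 B D C A, h2 C A B D, h2 C A D B, h2 C B A D, h2 C B D A, h2 C D A B, h2 C D B A, h2 D A B C, h2 D A C B, h2 D B A C, h2 D B C A, h2 D C A B, h2 D C B A]
  · intro L hL
    obtain ⟨k1, k2, k3, k4⟩ := hL
    have st := K_star L k1 k3
    have cyc := K_cyc L k1 k2 st
    constructor
    · refine ⟨?_, ?_, ?_, ?_⟩
      · intro A B C D; simp only [KtoW]; ring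
      · intro A B C D; simp only [KtoW]; ring
      · intro A B C D; simp only [KtoW]
        linarith [k1 A B C D, k1 A B D C, k1 A C B D, k1 A C D B, k1 A D B C, k1 A D C B, k1 B A C D, k1 B A D C, k1 B C A D, k1 B C D A, k1 B D A C, k1 B D C A, k1 C A B D, k1 C A D B, k1 C B A D, k1 C B D A, k1 C D A B, k1 C D B A, k1 D A B C, k1 D A C B, k1 D B A C, k1 D B C A, k1 D C A B, k1 D C B A,
          k2 A B C D, k2 A B D C, k2 A C B D, k2 A C D B, k2 A D B C, k2 A D C B, k2 B A C D, k2 B A D C, k2 B C A D, k2 B C D A, k2 B D A C, k2 B D C A, k2 C A B D, k2 C A D B, k2 C B A D, k2 C B D A, k2 C D A B, k2 C D B A, k2 D A B C, k2 D A C B, k2 D B A C, k2 D B C A, k2 D C A B, k2 D C B A]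
      · intro A C
        have expand : (∑ b, ∑ d, gi b d * KtoW L A b C d)
            = ∑ b, ∑ d, ((1/4) * (gi b d * L A b C d) - (1/4) * (gi b d * L b A C d)
              - (1/4) * (gi b d * L A b d C) + (1/4) * (gi b d * L b A d C)) :=
          Finset.sum_congr rfl fun b _ => Finset.sum_congr rfl fun d _ => by
            simp only [KtoW]; ring
        rw [expand]
        simp only [Finset.sum_add_distrib, Finset.sum_sub_distrib, ← Finset.mul_sum]
        have t1 := K_T24 gi hgis L k1 k3 k4 A C
        have t2 : (∑ b, ∑ d, gi b d * L b A C d) = 0 := by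
          have e : (∑ b, ∑ d, gi b d * L b A C d) = ∑ b, ∑ d, gi b d * L C A b d :=
            Finset.sum_congr rfl fun b _ => Finset.sum_congr rfl fun d _ => by rw [k2 b A C d]
          rw [e, k4 C A]
        have t3 := K_T2 gi hgis L k1 k4 A C
        have t4 := K_U gi hgis L k1 k2 k3 k4 A C
        rw [t1, t2, t3, t4]; ring
    · funext A B C D
      simp only [WtoK, KtoW]
      linarith [cyc A B C D, st A B C D, st B A C D, st D A B C, st C A B D,
        k1 A B C D, k1 A B D C, k1 A C B D, k1 A C D B, k1 A D B C, k1 A D C B, k1 B A C D, k1 B A D C, k1 B C A D, k1 B C D A, k1 B D A C, k1 B D C A, k1 C A B D, k1 C A D B, k1 C B A D, k1 C B D A, k1 C D A B, k1 C D B A, k1 D A B C, k1 D A C B, k1 D B A C, k1 D B C A, k1 D C A B, k1 D C B A,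
        k2 A B C D, k2 A B D C, k2 A C B D, k2 A C D B, k2 A D B C, k2 A D C B, k2 B A C D, k2 B A D C, k2 B C A D, k2 B C D A, k2 B D A C, k2 B D C A, k2 C A B D, k2 C A D B, k2 C B A D, k2 C B D A, k2 C D A B, k2 C D B A, k2 D A B C, k2 D A C B, k2 D B A C, k2 D B C A, k2 D C A B, k2 D C B A]
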